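/- arXiv:2410.18389 — 3 statements merged into one kernel-verified Lean document; each statement's English description precedes it below -/
import Mathlib

section
/- Let n : ℕ → ℕ be a function with finite support such that n(0) = 0, n(1) is even, n(2) is even, and ∑_d n(d)·φ(d) = 2, where φ is Euler's totient function. Let e be the least common multiple of the (nonempty, finite) set {d : n(d) > 0}. Then e ∈ {1, 2, 3, 4, 6}. -/
lemma dvd_twelve_of_totient_le_two {d : ℕ} (hd : d ≠ 0) (h : Nat.totient d ≤ 2) :
    d ∣ 12 := by
  rw [← Nat.factorization_le_iff_dvd hd (by norm_num), Finsupp.le_def]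
  intro p
  by_cases hp : p.Prime
  · rw [← Nat.Prime.pow_dvd_iff_le_factorization hp (by norm_num)]
    set k := d.factorization p with hk
    have hdvd : p ^ k ∣ d := Nat.ordProj_dvd d p
    have h1 : Nat.totient (p ^ k) ∣ Nat.totient d := Nat.totient_dvd_of_dvd hdvd
    have h2 : Nat.totient (p ^ k) ≤ 2 :=
      le_trans (Nat.le_of_dvd (Nat.totient_pos.mpr (Nat.pos_of_ne_zero hd)) h1) h
    rcases Nat.eq_zero_or_pos k with hk0 | hk0
    · simp [hk0]
    · rw [Nat.totient_prime_pow hp hk0] at h2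
      have hple : 2 ≤ p := hp.two_le
      have hpow1 : 1 ≤ p ^ (k - 1) := Nat.one_le_pow _ _ (by omega)
      rcases lt_trichotomy p 3 with h3 | h3 | h3
      · have hp2 : p = 2 := by omega
        subst hp2
        have hk2 : k ≤ 2 := by
          by_contra hc
          have : 2 ^ 2 ≤ 2 ^ (k - 1) := Nat.pow_le_pow_right (by norm_num) (by omega)
          omega
        exact dvd_trans (pow_dvd_pow 2 hk2) (by norm_num)
      · subst h3
        have hk1 : k = 1 := by
          by_contra hc
          have : 3 ^ 1 ≤ 3 ^ (k - 1) := Nat.pow_le_pow_right (by norm_num) (by omega)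
          omega
        rw [hk1]
        norm_num
      · exfalso
        have : p - 1 ≤ p ^ (k - 1) * (p - 1) := Nat.le_mul_of_pos_left _ (by omega)
        omega
  · simp [Nat.factorization_eq_zero_of_not_prime d hp]

/-- Combinatorial core of Corollary 2.3: if `n : ℕ → ℕ` has finite support,
`n 0 = 0`, `n 1` and `n 2` are even, and `∑ d, n d * φ d = 2`, then the lcm of
the support of `n` lies in `{1, 2, 3, 4, 6}`. -/
theorem totient_identity_lcm_mem (n : ℕ → ℕ) (hfin : (Function.support n).Finite)
    (h0 : n 0 = 0) (h1 : 2 ∣ n 1) (h2 : 2 ∣ n 2)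
    (hsum : ∑ d ∈ hfin.toFinset, n d * Nat.totient d = 2)
    (e : ℕ) (he : e = hfin.toFinset.lcm id) :
    e ∈ ({1, 2, 3, 4, 6} : Set ℕ) := by
  set S := hfin.toFinset with hS
  have hmem : ∀ d, d ∈ S ↔ n d ≠ 0 := by
    intro d; simp [hS, Set.Finite.mem_toFinset, Function.mem_support]
  have hpos : ∀ d ∈ S, 1 ≤ n d * Nat.totient d := by
    intro d hd
    have hnd : n d ≠ 0 := (hmem d).mp hd
    have hd0 : d ≠ 0 := by rintro rfl; exact hnd h0
    have : 0 < Nat.totient d := Nat.totient_pos.mpr (Nat.pos_of_ne_zero hd0)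
    exact Nat.one_le_iff_ne_zero.mpr (Nat.mul_ne_zero hnd (by omega))
  -- S is nonempty
  obtain ⟨d0, hd0S⟩ : S.Nonempty := by
    rw [Finset.nonempty_iff_ne_empty]
    intro hE
    rw [hE, Finset.sum_empty] at hsum
    exact absurd hsum (by norm_num)
  -- S is a singleton
  have hsing : S = {d0} := by
    apply Finset.eq_singleton_iff_unique_mem.mpr
    refine ⟨hd0S, fun b hbS => ?_⟩
    by_contra hne
    have hsub : ({b, d0} : Finset ℕ) ⊆ S := by
      intro x hx
      rcases Finset.mem_insert.mp hx with rfl | hx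
      · exact hbS
      · rwa [Finset.mem_singleton.mp hx]
    have hle : ∑ d ∈ ({b, d0} : Finset ℕ), n d * Nat.totient d ≤ 2 := by
      rw [← hsum]
      exact Finset.sum_le_sum_of_subset_of_nonneg hsub (fun i _ _ => Nat.zero_le _)
    rw [Finset.sum_pair hne] at hle
    have hb1 := hpos b hbS
    have hd1 := hpos d0 hd0S
    have heqb : n b * Nat.totient b = 1 := by omega
    have heqd : n d0 * Nat.totient d0 = 1 := by omega
    have hnb := Nat.eq_one_of_mul_eq_one_right heqb
    have htb := Nat.eq_one_of_mul_eq_one_left heqb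
    have hnd := Nat.eq_one_of_mul_eq_one_right heqd
    have htd := Nat.eq_one_of_mul_eq_one_left heqd
    have hb12 := Nat.totient_eq_one_iff.mp htb
    have hd12 := Nat.totient_eq_one_iff.mp htd
    -- both in {1,2}, distinct, so {b,d0} = {1,2}, but then n 1 = 1, contradicting 2 ∣ n 1
    rcases hb12 with rfl | rfl <;> rcases hd12 with rfl | rfl <;> omega
  rw [hsing] at hsum he
  rw [Finset.sum_singleton] at hsum
  rw [Finset.lcm_singleton, id, normalize_eq] at he
  subst he
  have hd0 : e ≠ 0 := by
    rintro rfl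
    have : n 0 ≠ 0 := (hmem 0).mp (hsing ▸ hd0S : (0 : ℕ) ∈ S)
    exact this h0
  have htle : Nat.totient e ≤ 2 := by
    have : 1 ≤ n e := Nat.one_le_iff_ne_zero.mpr ((hmem e).mp (hsing ▸ Finset.mem_singleton_self e))
    nlinarith [hsum]
  have hdvd : e ∣ 12 := dvd_twelve_of_totient_le_two hd0 htle
  have hle12 : e ≤ 12 := Nat.le_of_dvd (by norm_num) hdvd
  have h1' : 1 ≤ e := Nat.one_le_iff_ne_zero.mpr hd0
  interval_cases e
  all_goals (revert htle; decide)
end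

section
/- Let n be a positive even natural number, let c be an element of ℤ/nℤ, let g be a natural number, and let m be a multiset of elements of ℤ/nℤ with card(m) = 2g such that the image of m under the map x ↦ c − x equals m (as multisets) and the sum of the elements of m equals g·c. Then there exists a multiset P of pairs (x, y) ∈ (ℤ/nℤ) × (ℤ/nℤ) with card(P) = g, such that x + y = c for every pair (x, y) in P, and such that the multiset obtained as the sum of the image of P under first projection and the image of P under second projection equals m. -/
open Multiset

private lemma zmod_double_eq_zero (n : ℕ) (hn : 0 < n) (hne : Even n) (y : ZMod n)
    (h : y + y = 0) : y = 0 ∨ y = ((n / 2 : ℕ) : ZMod n) := by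
  haveI : NeZero n := ⟨hn.ne'⟩
  obtain ⟨k, hk⟩ := hne
  have hkpos : 0 < k := by omega
  have h1 : ((y.val + y.val : ℕ) : ZMod n) = 0 := by
    push_cast
    rw [ZMod.natCast_zmod_val]
    exact h
  have h2 : n ∣ y.val + y.val := (ZMod.natCast_eq_zero_iff _ _).1 h1
  have h3 : y.val < n := ZMod.val_lt y
  have h4 : y.val = 0 ∨ y.val = k := by
    rcases h2 with ⟨t, ht⟩
    have h7 : t < 2 := by
      rcases Nat.lt_or_ge t 2 with h | h
      · exact h
      · exfalso
        have h8 : n * 2 ≤ n * t := Nat.mul_le_mul_left _ h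
        have h9 : n * t < n * 2 := by rw [← ht]; omega
        exact absurd h9 (not_lt.2 h8)
    interval_cases t <;> omega
  have hkn : k = n / 2 := by omega
  rcases h4 with h4 | h4
  · left
    rw [← ZMod.natCast_zmod_val y, h4, Nat.cast_zero]
  · right
    rw [← ZMod.natCast_zmod_val y, h4, hkn]

/-- Combinatorial core of Theorem 5.1 (weak balancedness): a multiset `m` over `ℤ/nℤ`
(`n` positive and even) of cardinality `2g`, invariant under `x ↦ c - x` and with sum
`g • c`, can be partitioned into `g` unordered pairs each summing to `c`. -/
theorem multiset_pairing_of_invariant (n : ℕ) (hn : 0 < n) (hne : Even n)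
    (c : ZMod n) (g : ℕ) (m : Multiset (ZMod n)) (hcard : Multiset.card m = 2 * g)
    (hinv : m.map (fun x => c - x) = m) (hsum : m.sum = g • c) :
    ∃ P : Multiset (ZMod n × ZMod n), Multiset.card P = g ∧
      (∀ p ∈ P, p.1 + p.2 = c) ∧
      P.map Prod.fst + P.map Prod.snd = m := by
  classical
  induction g generalizing m with
  | zero =>
    have hm : m = 0 := by
      rw [← Multiset.card_eq_zero]; omega
    exact ⟨0, by simp, by simp, by simp [hm]⟩
  | succ g ih =>
    have hinj : Function.Injective (fun x : ZMod n => c - x) := by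
      intro x y h
      simpa using sub_right_injective h
    have hm0 : m ≠ 0 := by
      intro h; rw [h] at hcard; simp at hcard
    -- find x, y, m' with x + y = c and x ::ₘ y ::ₘ m' = m, m' satisfying the hypotheses
    obtain ⟨x, y, m', hxy, hm, hinv', hsum'⟩ :
        ∃ x y m', x + y = c ∧ x ::ₘ y ::ₘ m' = m ∧
          m'.map (fun z => c - z) = m' ∧ m'.sum = g • c := by
      by_cases hex : ∃ a ∈ m, c - a ≠ a
      · obtain ⟨a, ham, hne2⟩ := hex
        have hb : (c - a) ∈ m.erase a := by
          have hc : count (c - a) m = count a m := by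
            conv_lhs => rw [← hinv]
            exact Multiset.count_map_eq_count' _ m hinj a
          rw [← Multiset.count_pos, Multiset.count_erase_of_ne hne2, hc]
          exact Multiset.count_pos.2 ham
        refine ⟨a, c - a, (m.erase a).erase (c - a), by ring, ?_, ?_, ?_⟩
        · rw [Multiset.cons_erase hb, Multiset.cons_erase ham]
        · rw [Multiset.map_erase _ hinj, Multiset.map_erase _ hinj, hinv]
          simp only [sub_sub_cancel]
          rw [Multiset.erase_comm]
        · have h1 : a + ((c - a) + ((m.erase a).erase (c - a)).sum) = (g + 1) • c := by
            rw [← Multiset.sum_cons, ← Multiset.sum_cons, Multiset.cons_erase hb,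
              Multiset.cons_erase ham, hsum]
          rw [succ_nsmul] at h1
          linear_combination h1
      · push_neg at hex
        obtain ⟨a, ham⟩ := Multiset.exists_mem_of_ne_zero hm0
        have hca : c = a + a := by
          have := hex a ham
          linear_combination this
        set b : ZMod n := a + ((n / 2 : ℕ) : ZMod n) with hbdef
        have hab : a ≠ b := by
          intro h
          have : ((n / 2 : ℕ) : ZMod n) = 0 := by
            have := h.symm
            rw [hbdef] at this
            linear_combination this
          rw [ZMod.natCast_eq_zero_iff] at this
          obtain ⟨k, hk⟩ := hne
          have := Nat.le_of_dvd (by omega) this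
          omega
        have hmem : ∀ z ∈ m, z = a ∨ z = b := by
          intro z hz
          have h1 : (z - a) + (z - a) = 0 := by
            have h2 := hex z hz
            linear_combination hex a ham - h2
          rcases zmod_double_eq_zero n hn hne _ h1 with h | h
          · left; linear_combination h
          · right; rw [hbdef]; linear_combination h
        -- structure of m
        have hstruct : m = Multiset.replicate (m.count a) a + Multiset.replicate (m.count b) b := by
          ext z
          simp only [Multiset.count_add, Multiset.count_replicate]
          by_cases hza : z = a
          · subst hza
            rw [if_pos rfl, if_neg (fun h => hab h.symm), add_zero]
          · by_cases hzb : z = b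
            · subst hzb
              rw [if_neg hab, if_pos rfl, zero_add]
            · have hzm : z ∉ m := fun h => by rcases hmem z h with h' | h' <;> tauto
              rw [Multiset.count_eq_zero.2 hzm, if_neg (fun h => hza h.symm),
                if_neg (fun h => hzb h.symm), add_zero]
        set t := m.count a with htdef
        set s := m.count b with hsdef
        have hts : t + s = 2 * (g + 1) := by
          have := congrArg Multiset.card hstruct
          simpa [hcard] using this.symm
        -- sum computation: s • (n/2 : ZMod n) = 0
        have hs2 : (s : ZMod n) * ((n / 2 : ℕ) : ZMod n) = 0 := by
          have h1 : m.sum = t • a + s • b := by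
            rw [hstruct]; simp [Multiset.sum_replicate]
          rw [hsum, hca, hbdef] at h1
          have hcast : (t : ZMod n) + (s : ZMod n) = 2 * ((g : ZMod n) + 1) := by
            have h2 : ((t + s : ℕ) : ZMod n) = ((2 * (g + 1) : ℕ) : ZMod n) := by rw [hts]
            push_cast at h2
            linear_combination h2
          simp only [nsmul_eq_mul] at h1
          push_cast at h1
          linear_combination -h1 - a * hcast
        have hs_even : 2 ∣ s := by
          have hkne : ((n / 2 : ℕ) : ZMod n) ≠ 0 := by
            intro h
            rw [ZMod.natCast_eq_zero_iff] at h
            obtain ⟨k, hk⟩ := hne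
            have := Nat.le_of_dvd (by omega) h
            omega
          have h2k : (2 : ℕ) • ((n / 2 : ℕ) : ZMod n) = 0 := by
            obtain ⟨k, hk⟩ := hne
            have : ((n / 2 : ℕ) : ZMod n) + ((n / 2 : ℕ) : ZMod n) = ((n : ℕ) : ZMod n) := by
              rw [← Nat.cast_add]
              congr 1
              omega
            rw [two_nsmul, this, ZMod.natCast_self]
          have hord : addOrderOf ((n / 2 : ℕ) : ZMod n) = 2 :=
            addOrderOf_eq_prime h2k hkne
          rw [← hord]
          apply addOrderOf_dvd_of_nsmul_eq_zero
          rw [nsmul_eq_mul]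
          exact hs2
        have ht_pos : 0 < t := Multiset.count_pos.2 ham
        have ht2 : 2 ≤ t := by omega
        have ham' : a ∈ m.erase a := by
          rw [← Multiset.count_pos, Multiset.count_erase_self]
          omega
        refine ⟨a, a, (m.erase a).erase a, by rw [hca], ?_, ?_, ?_⟩
        · rw [Multiset.cons_erase ham', Multiset.cons_erase ham]
        · rw [Multiset.map_erase _ hinj, Multiset.map_erase _ hinj, hinv]
          simp only [hex a ham]
        · have h1 : a + (a + ((m.erase a).erase a).sum) = (g + 1) • c := by
            rw [← Multiset.sum_cons, ← Multiset.sum_cons, Multiset.cons_erase ham',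
              Multiset.cons_erase ham, hsum]
          rw [succ_nsmul] at h1
          linear_combination h1 + hca
    have hcard' : Multiset.card m' = 2 * g := by
      have := congrArg Multiset.card hm
      simp at this
      omega
    obtain ⟨P', hP'card, hP'mem, hP'eq⟩ := ih m' hcard' hinv' hsum'
    refine ⟨(x, y) ::ₘ P', by simp [hP'card], ?_, ?_⟩
    · intro p hp
      rcases Multiset.mem_cons.1 hp with h | h
      · rw [h]; exact hxy
      · exact hP'mem p h
    · simp only [Multiset.map_cons]
      rw [Multiset.cons_add, Multiset.add_cons, hP'eq, hm]
end

section
/- Let ℓ be a prime with ℓ ≡ 3 (mod 4), let p be a prime with p ≠ ℓ, and let f be a positive natural number. Set v := p^{f·(ℓ+1)/4} · (1 + (legendreSym ℓ p)^f) as an integer, where legendreSym ℓ p denotes the Legendre symbol (p/ℓ). Then either ℓ divides v, or legendreSym ℓ v = legendreSym ℓ 2. -/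
lemma legendreSym_pow_aux (q : ℕ) [Fact q.Prime] (a : ℤ) (k : ℕ) :
    legendreSym q (a ^ k) = (legendreSym q a) ^ k := by
  induction k with
  | zero => simp [legendreSym]
  | succ n ih => rw [pow_succ, legendreSym.mul, ih, pow_succ]

/-- Arithmetic core of the containment direction of Proposition 6.5: with
`v = p^{f(ℓ+1)/4}·(1 + (p/ℓ)^f)`, either `ℓ ∣ v` or `(v/ℓ) = (2/ℓ)`. -/
theorem trace_value_zero_or_square_class (ℓ p : ℕ) [hℓ : Fact ℓ.Prime]
    (hmod : ℓ % 4 = 3) (hp : p.Prime) (hne : p ≠ ℓ) (f : ℕ) (hf : 0 < f) :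
    (ℓ : ℤ) ∣ ((p : ℤ) ^ (f * ((ℓ + 1) / 4)) * (1 + (legendreSym ℓ p) ^ f)) ∨
      legendreSym ℓ ((p : ℤ) ^ (f * ((ℓ + 1) / 4)) * (1 + (legendreSym ℓ p) ^ f)) =
        legendreSym ℓ 2 := by
  have hp0 : ((p : ℤ) : ZMod ℓ) ≠ 0 := by
    push_cast
    rw [Ne, ZMod.natCast_eq_zero_iff]
    intro hdvd
    exact hne ((Nat.prime_dvd_prime_iff_eq hℓ.out hp).mp hdvd).symm
  have hε := legendreSym.eq_one_or_neg_one ℓ hp0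
  have hεf : (legendreSym ℓ p) ^ f = 1 ∨ (legendreSym ℓ p) ^ f = -1 := by
    rcases hε with h | h <;> rw [h]
    · left; exact one_pow f
    · rcases Nat.even_or_odd f with he | ho
      · left; exact he.neg_one_pow
      · right; exact ho.neg_one_pow
  rcases hεf with h1 | h1
  · right
    rw [h1, show ((1 : ℤ) + 1) = 2 by norm_num, legendreSym.mul,
      legendreSym_pow_aux, pow_mul, h1, one_pow, one_mul]
  · left
    rw [h1]
    norm_num
end
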